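/- Let (G_n, p_n) be a Mittag-Leffler inverse sequence of groups with inverse limit G and projections π_n : G → G_n. Then (G_n, p_n) is isomorphic in Tower-Grp to the inverse sequence (π_n(G), p_n|_{π_{n+1}(G)}). -/

import Mathlib

/-- Composite bonding map `p_{n m} : X_m → X_n` (for `n ≤ m`) of an inverse
sequence `(X_n, p_n)`. -/
def tbond (X : ℕ → Type u) (p : ∀ n, X (n + 1) → X n) {n m : ℕ} (h : n ≤ m) :
    X m → X n :=
  Nat.leRecOn h (fun {k} (g : X k → X n) (x : X (k + 1)) => g (p k x)) id

/-- The Mittag-Leffler property for an inverse sequence of sets: for every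
`n₀` there is `n₁ > n₀` such that the image of `X_n` in `X_{n₀}` equals the
image of `X_{n₁}` in `X_{n₀}` for all `n > n₁`. -/
def IsML (X : ℕ → Type u) (p : ∀ n, X (n + 1) → X n) : Prop :=
  ∀ n₀ : ℕ, ∃ n₁ : ℕ, ∃ h₁ : n₀ < n₁, ∀ n : ℕ, ∀ h : n₁ < n,
    Set.range (tbond X p (h₁.le.trans h.le)) = Set.range (tbond X p h₁.le)

/-- The inverse limit of an inverse sequence of groups, as a subgroup of the
product `∀ n, G n`: the threads `(g_n)` with `p n (g (n+1)) = g n`. -/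
def invLim (G : ℕ → Type u) [∀ n, Group (G n)] (p : ∀ n, G (n + 1) →* G n) :
    Subgroup (∀ n, G n) where
  carrier := {g | ∀ n, p n (g (n + 1)) = g n}
  mul_mem' := by
    intro a b ha hb n
    simp [map_mul, ha n, hb n]
  one_mem' := by
    intro n
    simp
  inv_mem' := by
    intro a ha n
    simp [ha n]

/-- A morphism of inverse sequences in `Tower-Set`. -/
structure TowerMor (X : ℕ → Type u) (p : ∀ n, X (n + 1) → X n)
    (Y : ℕ → Type v) (q : ∀ n, Y (n + 1) → Y n) where
  idx : ℕ → ℕ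
  f : ∀ n, X (idx n) → Y n
  coh : ∀ n n' : ℕ, ∀ h : n ≤ n', ∃ m : ℕ, ∃ h1 : idx n ≤ m, ∃ h2 : idx n' ≤ m,
    ∀ x : X m, f n (tbond X p h1 x) = tbond Y q h (f n' (tbond X p h2 x))

/-- Two inverse sequences of groups are isomorphic in `Tower-Grp` if there are
tower morphisms in both directions whose level maps are group homomorphisms
and whose composites are equivalent to the identity morphisms. -/
def TowerGrpIso (X : ℕ → Type u) [∀ n, Group (X n)] (p : ∀ n, X (n + 1) → X n)
    (Y : ℕ → Type v) [∀ n, Group (Y n)] (q : ∀ n, Y (n + 1) → Y n) : Prop :=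
  ∃ (F : TowerMor X p Y q) (G : TowerMor Y q X p),
    (∀ n, ∀ a b : X (F.idx n), F.f n (a * b) = F.f n a * F.f n b) ∧
    (∀ n, ∀ a b : Y (G.idx n), G.f n (a * b) = G.f n a * G.f n b) ∧
    (∀ n : ℕ, ∃ m : ℕ, ∃ h1 : F.idx (G.idx n) ≤ m, ∃ h2 : n ≤ m,
      ∀ x : X m, G.f n (F.f (G.idx n) (tbond X p h1 x)) = tbond X p h2 x) ∧
    (∀ n : ℕ, ∃ m : ℕ, ∃ h1 : G.idx (F.idx n) ≤ m, ∃ h2 : n ≤ m,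
      ∀ y : Y m, F.f n (G.f (F.idx n) (tbond Y q h1 y)) = tbond Y q h2 y)

/-- The image `π_n(G)` of the inverse limit in `G_n`, as a subgroup. -/
def projImage (G : ℕ → Type u) [∀ n, Group (G n)]
    (p : ∀ n, G (n + 1) →* G n) (n : ℕ) : Subgroup (G n) :=
  (invLim G p).map (Pi.evalMonoidHom G n)

/-- The bonding maps restricted to the images of the inverse limit. -/
def projImageBond (G : ℕ → Type u) [∀ n, Group (G n)]
    (p : ∀ n, G (n + 1) →* G n) (n : ℕ) :
    projImage G p (n + 1) → projImage G p n := fun x =>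
  ⟨p n x.1, by
    obtain ⟨g, hg, hgx⟩ := Subgroup.mem_map.mp x.2
    refine Subgroup.mem_map.mpr ⟨g, hg, ?_⟩
    have h1 : g (n + 1) = x.1 := hgx
    show g n = p n x.1
    rw [← h1]
    exact (hg n).symm⟩

/-!
Call `y : X n` stable if it lifts to every later stage. By the Mittag-Leffler condition, for every
`n` there is `m n ≥ n` such that the whole image of `X (m n)` in `X n` is stable, and every stable
element lifts to a stable element one stage up. Lifting step by step gives a thread of the inverse
limit, so stable elements of `G n` lie in `π_n(G)`. Hence `p_{n, m n}` lands in `π_n(G)`; with the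
inclusions `π_n(G) → G_n` it gives tower morphisms whose two composites are bonding maps.
-/

section Tower

variable {X : ℕ → Type u} {p : ∀ n, X (n + 1) → X n}

theorem tbond_refl {n : ℕ} (h : n ≤ n) (x : X n) : tbond X p h x = x := by
  unfold tbond
  rw [Nat.leRecOn_self]
  rfl

theorem tbond_succ {n m : ℕ} (h : n ≤ m) (h' : n ≤ m + 1) (x : X (m + 1)) :
    tbond X p h' x = tbond X p h (p m x) := by
  unfold tbond
  rw [Nat.leRecOn_succ (C := fun k => X k → X n) h (h2 := h') id]

theorem tbond_tbond {n k m : ℕ} (hnk : n ≤ k) (hkm : k ≤ m) (hnm : n ≤ m) (x : X m) :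
    tbond X p hnk (tbond X p hkm x) = tbond X p hnm x := by
  induction m, hkm using Nat.le_induction with
  | base => rw [tbond_refl]
  | succ m hkm ih => rw [tbond_succ hkm, tbond_succ (hnk.trans hkm), ih]

theorem map_tbond {n m : ℕ} (h : n + 1 ≤ m) (h' : n ≤ m) (x : X m) :
    p n (tbond X p h x) = tbond X p h' x := by
  rw [← tbond_tbond (Nat.le_succ n) h h', tbond_succ le_rfl, tbond_refl]

variable (X p) in
def stableRange (n : ℕ) : Set (X n) :=
  ⋂ (m) (h : n ≤ m), Set.range (tbond X p h)

theorem IsML.exists_range_tbond_subset_stableRange (hML : IsML X p) (n : ℕ) :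
    ∃ m, ∃ h : n ≤ m, Set.range (tbond X p h) ⊆ stableRange X p n := by
  obtain ⟨n₁, h₁, hrange⟩ := hML n
  refine ⟨n₁, h₁.le, ?_⟩
  rintro _ ⟨x, rfl⟩
  refine Set.mem_iInter₂.2 fun j hj => ?_
  rcases le_or_gt j n₁ with hjn | hjn
  · exact ⟨tbond X p hjn x, tbond_tbond hj hjn h₁.le x⟩
  · exact hrange j hjn ▸ ⟨x, rfl⟩

theorem IsML.exists_map_eq_of_mem_stableRange (hML : IsML X p) {n : ℕ} {y : X n}
    (hy : y ∈ stableRange X p n) : ∃ z ∈ stableRange X p (n + 1), p n z = y := by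
  obtain ⟨m, hm, hsub⟩ := hML.exists_range_tbond_subset_stableRange (n + 1)
  obtain ⟨x, rfl⟩ := Set.mem_iInter₂.1 hy m (Nat.le_of_succ_le hm)
  exact ⟨tbond X p hm x, hsub ⟨x, rfl⟩, map_tbond hm _ x⟩

theorem exists_thread_of_forall_exists_map_eq {S : ∀ n, Set (X n)}
    (hlift : ∀ n, ∀ y ∈ S n, ∃ z ∈ S (n + 1), p n z = y) {n : ℕ} {y : X n}
    (hy : y ∈ S n) :
    ∃ g : ∀ k, X k, (∀ k, p k (g (k + 1)) = g k) ∧ g n = y := by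
  choose lift hlift_mem hlift_eq using hlift
  -- `z i` lifts `y` to stage `n + i`; the thread at stage `k` is read off from stage `n + k`
  let z : ∀ i, S (n + i) := fun i =>
    Nat.rec (motive := fun i => S (n + i)) ⟨y, hy⟩
      (fun i zi => ⟨lift (n + i) zi zi.2, hlift_mem _ _ _⟩) i
  have hz : ∀ i, p (n + i) (z (i + 1)) = z i := fun i => hlift_eq _ _ _
  have hz_base : ∀ i, tbond X p (Nat.le_add_right n i) (z i) = y := by
    intro i
    induction i with
    | zero => exact tbond_refl _ _
    | succ i ih => rw [tbond_succ (Nat.le_add_right n i), hz, ih]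
  refine ⟨fun k => tbond X p (Nat.le_add_left k n) (z k), fun k => ?_, hz_base n⟩
  rw [map_tbond (p := p) _ (by omega), ← tbond_tbond (Nat.le_add_left k n) (Nat.le_succ _),
    tbond_succ le_rfl, tbond_refl, hz]

end Tower

section Groups

variable (G : ℕ → Type u) [∀ n, Group (G n)] (p : ∀ n, G (n + 1) →* G n)

theorem tbond_mul {n m : ℕ} (h : n ≤ m) (a b : G m) :
    tbond G (fun k => p k) h (a * b) = tbond G (fun k => p k) h a * tbond G (fun k => p k) h b := by
  induction m, h using Nat.le_induction with
  | base => simp only [tbond_refl]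
  | succ m h ih => simp only [tbond_succ h, map_mul, ih]

theorem coe_tbond_projImageBond {n m : ℕ} (h : n ≤ m) (y : projImage G p m) :
    (tbond (fun k => projImage G p k) (projImageBond G p) h y : G n) =
      tbond G (fun k => p k) h y := by
  induction m, h using Nat.le_induction with
  | base => simp only [tbond_refl]
  | succ m h ih => rw [tbond_succ h, tbond_succ h, ih]; rfl

theorem stableRange_subset_projImage (hML : IsML G fun n => p n) (n : ℕ) :
    stableRange G (fun n => p n) n ⊆ projImage G p n := by
  intro y hy
  obtain ⟨g, hg, rfl⟩ := exists_thread_of_forall_exists_map_eq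
    (fun _ _ hz => hML.exists_map_eq_of_mem_stableRange hz) hy
  exact ⟨g, hg, rfl⟩

def towerMorToProjImage (m : ℕ → ℕ) (hm : ∀ n, n ≤ m n)
    (hrange : ∀ n, Set.range (tbond G (fun k => p k) (hm n)) ⊆ projImage G p n) :
    TowerMor G (fun n => p n) (fun n => projImage G p n) (projImageBond G p) where
  idx := m
  f n x := ⟨tbond G (fun k => p k) (hm n) x, hrange n ⟨x, rfl⟩⟩
  coh n n' h := ⟨max (m n) (m n'), le_max_left _ _, le_max_right _ _, fun x => by
    ext
    dsimp only
    have : n ≤ max (m n) (m n') := (hm n).trans (le_max_left _ _)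
    rw [coe_tbond_projImageBond, tbond_tbond _ _ this, tbond_tbond _ _ (h.trans (hm n')),
      tbond_tbond _ _ this]⟩

def towerMorProjImageIncl :
    TowerMor (fun n => projImage G p n) (projImageBond G p) G (fun n => p n) where
  idx n := n
  f _ y := y.1
  coh _ n' h := ⟨n', h, le_rfl, fun y => by
    rw [tbond_refl]
    exact coe_tbond_projImageBond G p h y⟩

end Groups

/-- A Mittag-Leffler inverse sequence of groups is isomorphic in `Tower-Grp`
to the inverse sequence of the images of the inverse limit, with the
restricted bonding maps. -/
theorem mittagLeffler_iso_to_projection_images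
    (G : ℕ → Type u) [∀ n, Group (G n)] (p : ∀ n, G (n + 1) →* G n)
    (hML : IsML G (fun n => ⇑(p n))) :
    TowerGrpIso G (fun n => ⇑(p n))
      (fun n => projImage G p n) (projImageBond G p) := by
  choose m hm hstable using hML.exists_range_tbond_subset_stableRange
  have hrange : ∀ n, _ ⊆ (projImage G p n : Set (G n)) := fun n =>
    (hstable n).trans (stableRange_subset_projImage G p hML n)
  refine ⟨towerMorToProjImage G p m hm hrange, towerMorProjImageIncl G p,
    fun n a b => Subtype.ext (tbond_mul G p (hm n) a b), fun _ _ _ => rfl,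
    fun n => ⟨m n, le_rfl, hm n, fun x => ?_⟩, fun n => ⟨m n, le_rfl, hm n, fun y => ?_⟩⟩
  · exact congrArg _ (tbond_refl _ x)
  · ext
    change tbond G _ (hm n) (tbond (fun k => projImage G p k) _ le_rfl y : G (m n)) = _
    rw [tbond_refl, coe_tbond_projImageBond]
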